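/- arXiv:2004.10587 — 6 statements merged into one kernel-verified Lean document; each statement's English description precedes it below -/
import Mathlib

section
/- Let g : ℝ≥0 → ℝ≥0 satisfy g(xy) = g(x)g(y) for all x,y, g(2) = 2, g monotone increasing, and g not identically zero on positive reals. Then g(x) = x for all x > 0. -/
/-! A monotone multiplicative `f` fixing `c > 1` fixes every `c ^ m`, `m : ℤ`. If `f x ≠ x` for
some `x > 0`, the ratio of `x` and `f x` differs from `1`, so for large `n` the numbers `x ^ n` and
`f x ^ n = f (x ^ n)` have some `c ^ m` strictly between them; monotonicity of `f` at `x ^ n` and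
`c ^ m` then contradicts the order of `x ^ n` and `f (x ^ n)`. -/

open NNReal

section Archimedean

variable {K : Type*} [Semifield K] [LinearOrder K] [IsStrictOrderedRing K] [Archimedean K]
  [ExistsAddOfLE K]

lemma exists_zpow_btwn_of_mul_lt {a b c : K} (ha : 0 < a) (hc : 1 < c) (hab : c * a < b) :
    ∃ m : ℤ, a < c ^ m ∧ c ^ m < b := by
  obtain ⟨m, hcm, hac⟩ := exists_mem_Ico_zpow ha hc
  refine ⟨m + 1, hac, ?_⟩
  calc c ^ (m + 1) = c * c ^ m := by rw [zpow_add_one₀ (by positivity), mul_comm]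
    _ ≤ c * a := by gcongr
    _ < b := hab

lemma exists_pow_lt_zpow_lt_pow {a b c : K} (ha : 0 < a) (hab : a < b) (hc : 1 < c) :
    ∃ (n : ℕ) (m : ℤ), a ^ n < c ^ m ∧ c ^ m < b ^ n := by
  obtain ⟨n, hn⟩ := pow_unbounded_of_one_lt c ((one_lt_div ha).mpr hab)
  rw [div_pow, lt_div_iff₀ (by positivity)] at hn
  obtain ⟨m, hm⟩ := exists_zpow_btwn_of_mul_lt (pow_pos ha n) hc hn
  exact ⟨n, m, hm⟩

theorem MonoidWithZeroHom.apply_eq_self_of_monotone {f : K →*₀ K} (hf : Monotone f) {c : K}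
    (hc : 1 < c) (hfc : f c = c) {x : K} (hx : 0 < x) : f x = x := by
  have hf_zpow (m : ℤ) : f (c ^ m) = c ^ m := by rw [map_zpow₀, hfc]
  rcases lt_trichotomy (f x) x with hlt | heq | hgt
  · have hfx : 0 < f x :=
      lt_of_le_of_ne (map_zero f ▸ hf hx.le) ((map_ne_zero f).mpr hx.ne').symm
    obtain ⟨n, m, hfxn, hxn⟩ := exists_pow_lt_zpow_lt_pow hfx hlt hc
    have : c ^ m ≤ f x ^ n := by
      simpa only [hf_zpow, map_pow] using hf hxn.le
    exact absurd hfxn this.not_gt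
  · exact heq
  · obtain ⟨n, m, hxn, hfxn⟩ := exists_pow_lt_zpow_lt_pow hx hgt hc
    have : f x ^ n ≤ c ^ m := by
      simpa only [hf_zpow, map_pow] using hf hxn.le
    exact absurd hfxn this.not_gt

end Archimedean

section MapMul

variable {M N : Type*} [MulZeroOneClass N] [IsLeftCancelMulZero N] {g : M → N}

lemma map_one_of_map_mul [MulOneClass M] (hmul : ∀ x y, g (x * y) = g x * g y) {a : M}
    (ha : g a ≠ 0) : g 1 = 1 :=
  mul_left_cancel₀ ha (by rw [← hmul, mul_one, mul_one])

lemma map_zero_of_map_mul [MulZeroClass M] (hmul : ∀ x y, g (x * y) = g x * g y) {a : M}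
    (ha : g a ≠ 1) : g 0 = 0 := by
  by_contra h0
  exact ha (mul_left_cancel₀ h0 (by rw [← hmul, zero_mul, mul_one])).symm

end MapMul

theorem multiplicative_monotone_normalized_is_id_general (g : NNReal → NNReal)
    (hmul : ∀ x y : NNReal, g (x * y) = g x * g y)
    (h2 : g 2 = 2)
    (hmono : Monotone g) :
    ∀ x : NNReal, 0 < x → g x = x := by
  let f : ℝ≥0 →*₀ ℝ≥0 :=
    { toFun := g
      map_zero' := map_zero_of_map_mul hmul (a := 2) (by rw [h2]; norm_num)
      map_one' := map_one_of_map_mul hmul (a := 2) (by rw [h2]; norm_num)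
      map_mul' := hmul }
  intro x hx
  exact MonoidWithZeroHom.apply_eq_self_of_monotone (f := f) hmono one_lt_two h2 hx

theorem multiplicative_monotone_normalized_is_id (g : NNReal → NNReal)
    (hmul : ∀ x y : NNReal, g (x * y) = g x * g y)
    (h2 : g 2 = 2)
    (hmono : Monotone g)
    (hnz : ¬ ∀ x : NNReal, 0 < x → g x = 0) :
    ∀ x : NNReal, 0 < x → g x = x :=
  multiplicative_monotone_normalized_is_id_general g hmul h2 hmono
end

section
/- Let α ≥ 1 and let p, q, r, s be finitely supported functions from finite types 𝒳, 𝒴 to the nonnegative reals, with support of p, r contained in the support of q, s respectively. Suppose T : 𝒳 × 𝒴 → ℝ≥0 is substochastic, i.e. ∑_y T(x,y) ≤ 1 for every x, and suppose ∑_x T(x,y) p(x) ≥ r(y) and ∑_x T(x,y) q(x) = s(y) for every y. Then ∑_{y ∈ supp s} r(y)^α s(y)^(1-α) ≤ ∑_{x ∈ supp q} p(x)^α q(x)^(1-α). -/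
/-!
The summand `a ^ α * b ^ (1 - α)` is the perspective `b * (a / b) ^ α` of the convex function
`x ↦ x ^ α`, hence jointly convex and positively homogeneous, i.e. subadditive. Applied to the
column `y` of `T`, subadditivity and monotonicity in `a` bound the term of `(r, s)` at `y` by
`∑ x, T x y * p x ^ α * q x ^ (1 - α)`; summing over `y` and using `∑ y, T x y ≤ 1` finishes.
-/

open Finset

namespace Real

variable {α a b : ℝ}

/-- At `b = 0` the left side is `0` (as `a / 0 = 0`), while the right side is `a` when `α = 1`. -/
lemma mul_div_rpow_eq_rpow_mul_rpow_one_sub (hα : α ≠ 0) (ha : 0 ≤ a) (hb : 0 ≤ b)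
    (hab : b = 0 → a = 0) : b * (a / b) ^ α = a ^ α * b ^ (1 - α) := by
  rcases hb.eq_or_lt with rfl | hb
  · simp [hab rfl, zero_rpow hα]
  · rw [div_rpow ha hb.le, rpow_sub hb, rpow_one]
    field_simp

lemma mul_rpow_mul_mul_rpow_one_sub {c : ℝ} (hα : α ≠ 0) (hc : 0 ≤ c) (ha : 0 ≤ a)
    (hb : 0 ≤ b) : (c * a) ^ α * (c * b) ^ (1 - α) = c * (a ^ α * b ^ (1 - α)) := by
  rcases hc.eq_or_lt with rfl | hc
  · simp [zero_rpow hα]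
  · rw [mul_rpow hc.le ha, mul_rpow hc.le hb, mul_mul_mul_comm, ← rpow_add hc,
      add_sub_cancel, rpow_one]

variable {ι : Type*} {t : Finset ι} {f g : ι → ℝ}

lemma sum_rpow_mul_sum_rpow_one_sub_le (hα : 1 ≤ α) (hf : ∀ i ∈ t, 0 ≤ f i)
    (hg : ∀ i ∈ t, 0 ≤ g i) (hfg : ∀ i ∈ t, g i = 0 → f i = 0) :
    (∑ i ∈ t, f i) ^ α * (∑ i ∈ t, g i) ^ (1 - α) ≤ ∑ i ∈ t, f i ^ α * g i ^ (1 - α) := by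
  have hα₀ : α ≠ 0 := by positivity
  have hterm i (hi : i ∈ t) := mul_div_rpow_eq_rpow_mul_rpow_one_sub hα₀ (hf i hi) (hg i hi)
    (hfg i hi)
  have hsum_nonneg : 0 ≤ ∑ i ∈ t, g i := sum_nonneg hg
  have hsum_zero : ∑ i ∈ t, g i = 0 → ∑ i ∈ t, f i = 0 := fun h =>
    sum_eq_zero fun i hi => hfg i hi ((sum_eq_zero_iff_of_nonneg hg).1 h i hi)
  rw [← mul_div_rpow_eq_rpow_mul_rpow_one_sub hα₀ (sum_nonneg hf) hsum_nonneg hsum_zero,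
    ← sum_congr rfl hterm]
  rcases hsum_nonneg.eq_or_lt with hG | hG
  · rw [← hG, zero_mul]
    exact sum_nonneg fun i hi => mul_nonneg (hg i hi) (rpow_nonneg (div_nonneg (hf i hi)
      (hg i hi)) α)
  set G := ∑ i ∈ t, g i
  have hmean : ∑ i ∈ t, f i / G = ∑ i ∈ t, g i / G * (f i / g i) := by
    refine sum_congr rfl fun i hi => ?_
    rcases eq_or_ne (g i) 0 with h | h
    · simp [h, hfg i hi h]
    · field_simp
  have hjensen : (∑ i ∈ t, f i / G) ^ α ≤ ∑ i ∈ t, g i / G * (f i / g i) ^ α := by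
    rw [hmean]
    refine rpow_arith_mean_le_arith_mean_rpow t _ _ (fun i hi => by positivity [hg i hi])
      (by rw [← sum_div, div_self hG.ne']) (fun i hi => div_nonneg (hf i hi) (hg i hi)) hα
  calc G * ((∑ i ∈ t, f i) / G) ^ α ≤ G * ∑ i ∈ t, g i / G * (f i / g i) ^ α := by
        rw [sum_div]; exact mul_le_mul_of_nonneg_left hjensen hG.le
    _ = ∑ i ∈ t, g i * (f i / g i) ^ α := by
        rw [mul_sum]
        refine sum_congr rfl fun i _ => ?_
        field_simp

lemma sum_mul_rpow_mul_sum_mul_rpow_one_sub_le {w : ι → ℝ} (hα : 1 ≤ α)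
    (hw : ∀ i ∈ t, 0 ≤ w i) (hf : ∀ i ∈ t, 0 ≤ f i) (hg : ∀ i ∈ t, 0 ≤ g i)
    (hfg : ∀ i ∈ t, g i = 0 → f i = 0) :
    (∑ i ∈ t, w i * f i) ^ α * (∑ i ∈ t, w i * g i) ^ (1 - α)
      ≤ ∑ i ∈ t, w i * (f i ^ α * g i ^ (1 - α)) := by
  calc _ ≤ ∑ i ∈ t, (w i * f i) ^ α * (w i * g i) ^ (1 - α) :=
        sum_rpow_mul_sum_rpow_one_sub_le hα (fun i hi => mul_nonneg (hw i hi) (hf i hi))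
          (fun i hi => mul_nonneg (hw i hi) (hg i hi)) fun i hi h => by
            rcases mul_eq_zero.1 h with h | h <;> simp [h, hfg i hi]
    _ = _ := sum_congr rfl fun i hi =>
        mul_rpow_mul_mul_rpow_one_sub (by positivity) (hw i hi) (hf i hi) (hg i hi)

end Real

open Real in
theorem renyi_quasi_entropy_data_processing_general
    {X Y : Type} [Fintype X] [Fintype Y]
    (α : ℝ) (hα : 1 ≤ α)
    (p q : X → ℝ) (r s : Y → ℝ)
    (hp : ∀ x, 0 ≤ p x) (hq : ∀ x, 0 ≤ q x)
    (hr : ∀ y, 0 ≤ r y) (hs : ∀ y, 0 ≤ s y)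
    (hpq : ∀ x, q x = 0 → p x = 0)
    (T : X → Y → ℝ)
    (hT : ∀ x y, 0 ≤ T x y)
    (hTsub : ∀ x, ∑ y, T x y ≤ 1)
    (hTp : ∀ y, r y ≤ ∑ x, T x y * p x)
    (hTq : ∀ y, ∑ x, T x y * q x = s y) :
    ∑ y ∈ univ.filter (fun y => s y ≠ 0), r y ^ α * s y ^ (1 - α)
      ≤ ∑ x ∈ univ.filter (fun x => q x ≠ 0), p x ^ α * q x ^ (1 - α) := by
  have hterm_nonneg x : 0 ≤ p x ^ α * q x ^ (1 - α) := by positivity [hp x, hq x]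
  have hcolumn y : r y ^ α * s y ^ (1 - α) ≤ ∑ x, T x y * (p x ^ α * q x ^ (1 - α)) := by
    calc r y ^ α * s y ^ (1 - α) ≤ (∑ x, T x y * p x) ^ α * s y ^ (1 - α) :=
          mul_le_mul_of_nonneg_right (rpow_le_rpow (hr y) (hTp y) (by positivity))
            (rpow_nonneg (hs y) _)
      _ ≤ _ := hTq y ▸ sum_mul_rpow_mul_sum_mul_rpow_one_sub_le hα (fun x _ => hT x y)
          (fun x _ => hp x) (fun x _ => hq x) fun x _ => hpq x
  calc _ ≤ ∑ y, r y ^ α * s y ^ (1 - α) :=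
        sum_le_sum_of_subset_of_nonneg (filter_subset _ _) fun y _ _ => by positivity [hr y, hs y]
    _ ≤ ∑ y, ∑ x, T x y * (p x ^ α * q x ^ (1 - α)) := sum_le_sum fun y _ => hcolumn y
    _ = ∑ x, (∑ y, T x y) * (p x ^ α * q x ^ (1 - α)) := by rw [sum_comm]; simp only [sum_mul]
    _ ≤ ∑ x, p x ^ α * q x ^ (1 - α) :=
        sum_le_sum fun x _ => mul_le_of_le_one_left (hterm_nonneg x) (hTsub x)
    _ = _ := by
        refine (sum_filter_of_ne fun x _ h => ?_).symm
        contrapose! h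
        simp [h, hpq x h, zero_rpow (by positivity : α ≠ 0)]

theorem renyi_quasi_entropy_data_processing
    {X Y : Type} [Fintype X] [Fintype Y] [DecidableEq X] [DecidableEq Y]
    (α : ℝ) (hα : 1 ≤ α)
    (p q : X → ℝ) (r s : Y → ℝ)
    (hp : ∀ x, 0 ≤ p x) (hq : ∀ x, 0 ≤ q x)
    (hr : ∀ y, 0 ≤ r y) (hs : ∀ y, 0 ≤ s y)
    (hpq : ∀ x, q x = 0 → p x = 0) (hrs : ∀ y, s y = 0 → r y = 0)
    (T : X → Y → ℝ)
    (hT : ∀ x y, 0 ≤ T x y)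
    (hTsub : ∀ x, ∑ y, T x y ≤ 1)
    (hTp : ∀ y, r y ≤ ∑ x, T x y * p x)
    (hTq : ∀ y, ∑ x, T x y * q x = s y) :
    ∑ y ∈ univ.filter (fun y => s y ≠ 0), r y ^ α * s y ^ (1 - α)
      ≤ ∑ x ∈ univ.filter (fun x => q x ≠ 0), p x ^ α * q x ^ (1 - α) :=
  renyi_quasi_entropy_data_processing_general α hα p q r s hp hq hr hs hpq T hT hTsub hTp hTq
end

section
/- Let A be a normal operator on a finite-dimensional complex Hilbert space H with spectral projections P_λ for λ in the spectrum of A, and define the pinching map 𝒫_A(X) = ∑_λ P_λ X P_λ. Then for every positive semidefinite X, X ≤ |spec(A)| · 𝒫_A(X). -/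
open Matrix
open scoped ComplexOrder

/-! The identity `n • ∑ i, P i X P i - X = ½ ∑ i j, (P i - P j) X (P i - P j)ᴴ`, with `n` the
number of projections, writes the difference as a sum of congruences of `X`. -/

theorem Finset.sum_sum_sub_mul_mul_sub {R ι : Type*} [Ring R] [Fintype ι] {p : ι → R}
    (hp : ∑ i, p i = 1) (x : R) :
    ∑ i, ∑ j, (p i - p j) * x * (p i - p j) =
      2 • (Fintype.card ι • ∑ i, p i * x * p i - x) := by
  have hx : ∑ i, ∑ j, p i * x * p j = x := by
    rw [← Finset.sum_mul_sum, ← Finset.sum_mul, hp, one_mul, mul_one]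
  have expand : ∀ i j, (p i - p j) * x * (p i - p j) =
      p i * x * p i - p i * x * p j - p j * x * p i + p j * x * p j := fun i j => by
    noncomm_ring
  simp only [expand, Finset.sum_add_distrib, Finset.sum_sub_distrib, Finset.sum_const,
    Finset.card_univ, ← Finset.smul_sum, hx]
  rw [Finset.sum_comm (f := fun i j => p j * x * p i), hx]
  abel

theorem pinching_inequality_general {d : Type} [Fintype d] [DecidableEq d]
    {ι : Type} [Fintype ι]
    (P : ι → Matrix d d ℂ)
    (hproj : ∀ i, P i * P i = P i ∧ (P i)ᴴ = P i)
    (hsum : ∑ i, P i = 1)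
    (X : Matrix d d ℂ) (hX : X.PosSemidef) :
    ((Fintype.card ι : ℂ) • (∑ i, P i * X * P i) - X).PosSemidef := by
  have hP : ∀ i j, (P i - P j)ᴴ = P i - P j := fun i j => by
    rw [conjTranspose_sub, (hproj i).2, (hproj j).2]
  have hdouble : ((2 : ℂ) • ((Fintype.card ι : ℂ) • (∑ i, P i * X * P i) - X)).PosSemidef := by
    have := posSemidef_sum Finset.univ fun i _ => posSemidef_sum Finset.univ fun j _ =>
      hX.mul_mul_conjTranspose_same (P i - P j)
    simp only [hP, Finset.sum_sum_sub_mul_mul_sub hsum] at this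
    simpa only [Nat.cast_smul_eq_nsmul, ofNat_smul_eq_nsmul] using this
  simpa using hdouble.smul (a := (2⁻¹ : ℂ)) (by norm_num [Complex.le_def])

/-- The pinching inequality: if `A` is a normal operator with spectral decomposition
`A = ∑ λ_i • P_i` (the `P_i` pairwise orthogonal nonzero projections summing to the identity,
with distinct eigenvalues `λ_i`), then for every positive semidefinite `X` we have
`X ≤ |spec A| • ∑ i, P i * X * P i` in the Loewner order. -/
theorem pinching_inequality {d : Type} [Fintype d] [DecidableEq d]
    {ι : Type} [Fintype ι]
    (A : Matrix d d ℂ) (hA : A * Aᴴ = Aᴴ * A)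
    (lam : ι → ℂ) (hlam : Function.Injective lam)
    (P : ι → Matrix d d ℂ)
    (hproj : ∀ i, P i * P i = P i ∧ (P i)ᴴ = P i)
    (hPne : ∀ i, P i ≠ 0)
    (horth : ∀ i j, i ≠ j → P i * P j = 0)
    (hsum : ∑ i, P i = 1)
    (hdecomp : A = ∑ i, lam i • P i)
    (X : Matrix d d ℂ) (hX : X.PosSemidef) :
    ((Fintype.card ι : ℂ) • (∑ i, P i * X * P i) - X).PosSemidef :=
  pinching_inequality_general P hproj hsum X hX
end

section
/- For α ≥ 1, the map M ↦ Tr M^α is monotone increasing and convex on the cone of positive semidefinite operators on a finite-dimensional Hilbert space: if 0 ≤ M ≤ N then Tr M^α ≤ Tr N^α, and Tr(tM + (1-t)N)^α ≤ t·Tr M^α + (1-t)·Tr N^α for t ∈ [0,1]. -/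
open Matrix
open scoped ComplexOrder

/-!
For a Hermitian `A` with eigenbasis `V` and a unitary `U`, the diagonal of `Uᴴ A U` is `W λ(A)`,
where `W i j = ‖(Uᴴ V) i j‖²` is doubly stochastic. Jensen's inequality then gives the Peierls
inequality `∑ i, f ((Uᴴ A U) i i) ≤ ∑ j, f (λ j(A))` for convex `f`. Monotonicity follows by taking
`U` an eigenbasis of `M`, since then `λ i(M) = (Uᴴ M U) i i ≤ (Uᴴ N U) i i`; convexity by taking
`U` an eigenbasis of `t M + (1 - t) N`, whose eigenvalues are then
`t (Uᴴ M U) i i + (1 - t) (Uᴴ N U) i i`, and applying convexity of `x ↦ x ^ α` entrywise.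
-/

open scoped Classical in
/-- `Tr M^α` for a Hermitian matrix `M`, defined via its eigenvalues (real exponent `α`). -/
noncomputable def traceRpow {ι : Type} [Fintype ι] [DecidableEq ι]
    (M : Matrix ι ι ℂ) (α : ℝ) : ℝ :=
  if h : M.IsHermitian then ∑ i, (h.eigenvalues i) ^ α else 0

theorem ConvexOn.sum_map_mulVec_le {n : Type*} [Fintype n] [DecidableEq n] {s : Set ℝ}
    {f : ℝ → ℝ} (hf : ConvexOn ℝ s f) {W : Matrix n n ℝ} (hW : W ∈ doublyStochastic ℝ n)
    {x : n → ℝ} (hx : ∀ j, x j ∈ s) :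
    ∑ i, f ((W *ᵥ x) i) ≤ ∑ j, f (x j) :=
  calc ∑ i, f ((W *ᵥ x) i) ≤ ∑ i, ∑ j, W i j * f (x j) :=
        Finset.sum_le_sum fun i _ => by
          simpa [mulVec, dotProduct] using hf.map_sum_le
            (fun _ _ => nonneg_of_mem_doublyStochastic hW)
            (sum_row_of_mem_doublyStochastic hW i) fun j _ => hx j
    _ = ∑ j, f (x j) := by
        rw [Finset.sum_comm]
        simp [← Finset.sum_mul, sum_col_of_mem_doublyStochastic hW]

namespace Matrix

variable {n 𝕜 : Type*} [Fintype n] [DecidableEq n] [RCLike 𝕜]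

lemma mulVec_mem_of_mem_doublyStochastic {W : Matrix n n ℝ} (hW : W ∈ doublyStochastic ℝ n)
    {s : Set ℝ} (hs : Convex ℝ s) {x : n → ℝ} (hx : ∀ j, x j ∈ s) (i : n) : (W *ᵥ x) i ∈ s :=
  hs.sum_mem (fun _ _ => nonneg_of_mem_doublyStochastic hW) (sum_row_of_mem_doublyStochastic hW i)
    fun j _ => hx j

omit [DecidableEq n] in
lemma mul_conjTranspose_apply_self (P : Matrix n n 𝕜) (i : n) :
    (P * Pᴴ) i i = ((∑ j, ‖P i j‖ ^ 2 : ℝ) : 𝕜) := by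
  simp [mul_apply, RCLike.mul_conj]

lemma of_normSq_mem_doublyStochastic {U : Matrix n n 𝕜} (hU : U ∈ unitaryGroup n 𝕜) :
    of (fun i j => ‖U i j‖ ^ 2) ∈ doublyStochastic ℝ n := by
  refine mem_doublyStochastic_iff_sum.mpr ⟨fun i j => sq_nonneg _, fun i => ?_, fun j => ?_⟩
  · have := mul_conjTranspose_apply_self U i
    rw [← star_eq_conjTranspose, mem_unitaryGroup_iff.mp hU, one_apply_eq] at this
    exact_mod_cast this.symm
  · have := mul_conjTranspose_apply_self Uᴴ j
    rw [conjTranspose_conjTranspose, ← star_eq_conjTranspose, mem_unitaryGroup_iff'.mp hU,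
      one_apply_eq] at this
    simp only [star_apply, norm_star] at this
    exact_mod_cast this.symm

lemma mul_diagonal_mul_conjTranspose_apply_self (P : Matrix n n 𝕜) (d : n → ℝ) (i : n) :
    (P * diagonal (RCLike.ofReal ∘ d : n → 𝕜) * Pᴴ) i i = ((∑ j, ‖P i j‖ ^ 2 * d j : ℝ) : 𝕜) := by
  rw [mul_apply]
  simp only [mul_diagonal, conjTranspose_apply, RCLike.ofReal_sum]
  refine Finset.sum_congr rfl fun j _ => ?_
  rw [mul_right_comm, RCLike.star_def, RCLike.mul_conj, Function.comp_apply]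
  push_cast
  ring

namespace IsHermitian

variable {A : Matrix n n 𝕜} (hA : A.IsHermitian)
include hA

lemma conjTranspose_eigenvectorUnitary_mul_mul_apply_self (i : n) :
    ((hA.eigenvectorUnitary : Matrix n n 𝕜)ᴴ * A * hA.eigenvectorUnitary) i i =
      hA.eigenvalues i := by
  simpa [Unitary.conjStarAlgAut_star_apply, star_eq_conjTranspose] using
    congr_fun₂ hA.conjStarAlgAut_star_eigenvectorUnitary i i

lemma exists_doublyStochastic_re_diag_conj_eq {U : Matrix n n 𝕜} (hU : U ∈ unitaryGroup n 𝕜) :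
    ∃ W ∈ doublyStochastic ℝ n, ∀ i, RCLike.re ((Uᴴ * A * U) i i) = (W *ᵥ hA.eigenvalues) i := by
  set P := Uᴴ * (hA.eigenvectorUnitary : Matrix n n 𝕜)
  have hP : P ∈ unitaryGroup n 𝕜 := mul_mem (Unitary.star_mem hU) hA.eigenvectorUnitary.2
  refine ⟨of fun i j => ‖P i j‖ ^ 2, of_normSq_mem_doublyStochastic hP, fun i => ?_⟩
  have hconj : Uᴴ * A * U = P * diagonal (RCLike.ofReal ∘ hA.eigenvalues) * Pᴴ := by
    conv_lhs => rw [hA.spectral_theorem, Unitary.conjStarAlgAut_apply]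
    simp [P, Matrix.mul_assoc, conjTranspose_mul, star_eq_conjTranspose]
  rw [hconj, mul_diagonal_mul_conjTranspose_apply_self, RCLike.ofReal_re]
  simp [mulVec, dotProduct]

lemma re_diag_conj_mem {U : Matrix n n 𝕜} (hU : U ∈ unitaryGroup n 𝕜) {s : Set ℝ}
    (hs : Convex ℝ s) (hAs : ∀ j, hA.eigenvalues j ∈ s) (i : n) :
    RCLike.re ((Uᴴ * A * U) i i) ∈ s := by
  obtain ⟨W, hW, hdiag⟩ := hA.exists_doublyStochastic_re_diag_conj_eq hU
  exact hdiag i ▸ mulVec_mem_of_mem_doublyStochastic hW hs hAs i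

lemma sum_map_re_diag_conj_le {U : Matrix n n 𝕜} (hU : U ∈ unitaryGroup n 𝕜) {s : Set ℝ}
    {f : ℝ → ℝ} (hf : ConvexOn ℝ s f) (hAs : ∀ j, hA.eigenvalues j ∈ s) :
    ∑ i, f (RCLike.re ((Uᴴ * A * U) i i)) ≤ ∑ j, f (hA.eigenvalues j) := by
  obtain ⟨W, hW, hdiag⟩ := hA.exists_doublyStochastic_re_diag_conj_eq hU
  simpa only [hdiag] using hf.sum_map_mulVec_le hW hAs

end IsHermitian

theorem IsHermitian.sum_map_eigenvalues_le_of_posSemidef_sub {M N : Matrix n n 𝕜}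
    (hM : M.IsHermitian) (hN : N.IsHermitian) (hNM : (N - M).PosSemidef) {s : Set ℝ}
    {f : ℝ → ℝ} (hf_mono : MonotoneOn f s) (hf : ConvexOn ℝ s f)
    (hMs : ∀ i, hM.eigenvalues i ∈ s) (hNs : ∀ i, hN.eigenvalues i ∈ s) :
    ∑ i, f (hM.eigenvalues i) ≤ ∑ i, f (hN.eigenvalues i) := by
  set V := (hM.eigenvectorUnitary : Matrix n n 𝕜)
  have hV : V ∈ unitaryGroup n 𝕜 := hM.eigenvectorUnitary.2
  have hle (i : n) : hM.eigenvalues i ≤ RCLike.re ((Vᴴ * N * V) i i) := by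
    have := (RCLike.nonneg_iff.mp ((hNM.conjTranspose_mul_mul_same V).diag_nonneg (i := i))).1
    rw [Matrix.mul_sub, Matrix.sub_mul, sub_apply, map_sub,
      hM.conjTranspose_eigenvectorUnitary_mul_mul_apply_self, RCLike.ofReal_re] at this
    linarith
  calc ∑ i, f (hM.eigenvalues i) ≤ ∑ i, f (RCLike.re ((Vᴴ * N * V) i i)) :=
        Finset.sum_le_sum fun i _ => hf_mono (hMs i) (hN.re_diag_conj_mem hV hf.1 hNs i) (hle i)
    _ ≤ ∑ i, f (hN.eigenvalues i) := hN.sum_map_re_diag_conj_le hV hf hNs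

theorem IsHermitian.sum_map_eigenvalues_smul_add_smul_le {M N : Matrix n n 𝕜}
    (hM : M.IsHermitian) (hN : N.IsHermitian) {t : ℝ} (ht₀ : 0 ≤ t) (ht₁ : t ≤ 1)
    (hMN : (t • M + (1 - t) • N).IsHermitian) {s : Set ℝ} {f : ℝ → ℝ} (hf : ConvexOn ℝ s f)
    (hMs : ∀ i, hM.eigenvalues i ∈ s) (hNs : ∀ i, hN.eigenvalues i ∈ s) :
    ∑ i, f (hMN.eigenvalues i) ≤
      t * ∑ i, f (hM.eigenvalues i) + (1 - t) * ∑ i, f (hN.eigenvalues i) := by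
  set V := (hMN.eigenvectorUnitary : Matrix n n 𝕜)
  have hV : V ∈ unitaryGroup n 𝕜 := hMN.eigenvectorUnitary.2
  set d : Matrix n n 𝕜 → n → ℝ := fun X i => RCLike.re ((Vᴴ * X * V) i i)
  have hsplit (i : n) : hMN.eigenvalues i = t * d M i + (1 - t) * d N i := by
    rw [← RCLike.ofReal_re (K := 𝕜) (hMN.eigenvalues i),
      ← hMN.conjTranspose_eigenvectorUnitary_mul_mul_apply_self]
    simp [d, V, Matrix.mul_add, Matrix.add_mul, RCLike.real_smul_eq_coe_mul]
  calc ∑ i, f (hMN.eigenvalues i) ≤ ∑ i, (t * f (d M i) + (1 - t) * f (d N i)) :=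
        Finset.sum_le_sum fun i _ => by
          simpa only [hsplit, smul_eq_mul] using hf.2 (hM.re_diag_conj_mem hV hf.1 hMs i)
            (hN.re_diag_conj_mem hV hf.1 hNs i) ht₀ (sub_nonneg.mpr ht₁) (add_sub_cancel t 1)
    _ = t * ∑ i, f (d M i) + (1 - t) * ∑ i, f (d N i) := by
        rw [Finset.sum_add_distrib, Finset.mul_sum, Finset.mul_sum]
    _ ≤ t * ∑ i, f (hM.eigenvalues i) + (1 - t) * ∑ i, f (hN.eigenvalues i) := by
        gcongr ?_ + ?_
        · exact mul_le_mul_of_nonneg_left (hM.sum_map_re_diag_conj_le hV hf hMs) ht₀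
        · exact mul_le_mul_of_nonneg_left (hN.sum_map_re_diag_conj_le hV hf hNs)
            (sub_nonneg.mpr ht₁)

end Matrix

lemma traceRpow_eq {ι : Type} [Fintype ι] [DecidableEq ι] {M : Matrix ι ι ℂ}
    (hM : M.IsHermitian) (α : ℝ) : traceRpow M α = ∑ i, hM.eigenvalues i ^ α := by
  rw [traceRpow, dif_pos hM]

/-- For `α ≥ 1`, the map `M ↦ Tr M^α` is monotone and convex on positive semidefinite
matrices. -/
theorem traceRpow_monotone_and_convex {ι : Type} [Fintype ι] [DecidableEq ι]
    (α : ℝ) (hα : 1 ≤ α) :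
    (∀ M N : Matrix ι ι ℂ, M.PosSemidef → (N - M).PosSemidef →
      traceRpow M α ≤ traceRpow N α) ∧
    (∀ M N : Matrix ι ι ℂ, M.PosSemidef → N.PosSemidef → ∀ t : ℝ, 0 ≤ t → t ≤ 1 →
      traceRpow (((t : ℂ) • M) + (((1 - t : ℝ) : ℂ) • N)) α
        ≤ t * traceRpow M α + (1 - t) * traceRpow N α) := by
  have hconv : ConvexOn ℝ (Set.Ici 0) (fun x : ℝ => x ^ α) := convexOn_rpow hα
  have hmono : MonotoneOn (fun x : ℝ => x ^ α) (Set.Ici 0) :=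
    Real.monotoneOn_rpow_Ici_of_exponent_nonneg (by linarith)
  refine ⟨fun M N hM hNM => ?_, fun M N hM hN t ht₀ ht₁ => ?_⟩
  · have hN : N.PosSemidef := by simpa using hNM.add hM
    rw [traceRpow_eq hM.1, traceRpow_eq hN.1]
    exact hM.1.sum_map_eigenvalues_le_of_posSemidef_sub hN.1 hNM hmono hconv
      hM.eigenvalues_nonneg hN.eigenvalues_nonneg
  · have hMN : (t • M + (1 - t) • N).PosSemidef :=
      (hM.smul ht₀).add (hN.smul (sub_nonneg.mpr ht₁))
    simp only [Complex.coe_smul]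
    rw [traceRpow_eq hMN.1, traceRpow_eq hM.1, traceRpow_eq hN.1]
    exact hM.1.sum_map_eigenvalues_smul_add_smul_le hN.1 ht₀ ht₁ hMN.1 hconv
      hM.eigenvalues_nonneg hN.eigenvalues_nonneg
end

section
/- Let ρ, σ be positive semidefinite operators on a finite-dimensional Hilbert space H with supp ρ ⊆ supp σ, σ ≠ 0, and suppose ρ ≤ σ and rank(σ - ρ) < rank σ. Then there exists n ∈ ℕ such that there is a completely positive trace-nonincreasing map T₁ : B(ℂⁿ ⊗ H) → ℂ with T₁(Iₙ ⊗ ρ) ≥ 1 and T₁(Iₙ ⊗ σ) = 1, and a completely positive trace-nonincreasing map T₂ : B(ℂⁿ) → B(H) with T₂(Iₙ) ≥ ρ and T₂(Iₙ) = σ; i.e. 1 ≼ n(ρ,σ) and (ρ,σ) ≼ n in the dichotomy preorder. -/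
open Matrix
open scoped Kronecker ComplexOrder

/-- `T` is a completely positive trace-nonincreasing linear map between matrix algebras,
expressed via a Kraus representation `T X = ∑ i, K i * X * (K i)ᴴ` with `∑ i, (K i)ᴴ * K i ≤ 1`. -/
def IsCPTNI {ι κ : Type} [Fintype ι] [DecidableEq ι] [Fintype κ] [DecidableEq κ]
    (T : Matrix ι ι ℂ →ₗ[ℂ] Matrix κ κ ℂ) : Prop :=
  ∃ (m : ℕ) (K : Fin m → Matrix κ ι ℂ),
    (∀ X, T X = ∑ i, K i * X * (K i)ᴴ) ∧
    ((1 : Matrix ι ι ℂ) - ∑ i, (K i)ᴴ * K i).PosSemidef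

/-- `supp ρ ⊆ supp σ`, expressed as inclusion of kernels: `ker σ ⊆ ker ρ`. -/
def SuppLE {ι : Type} [Fintype ι] (ρ σ : Matrix ι ι ℂ) : Prop :=
  ∀ v : ι → ℂ, σ.mulVec v = 0 → ρ.mulVec v = 0

/-! ### Auxiliary definitions and lemmas -/

/-- The linear map given by a Kraus family `X ↦ ∑ i, K i * X * (K i)ᴴ`. -/
noncomputable def krausMap {ι κ μ : Type*} [Fintype ι] [Fintype κ] [Fintype μ]
    (K : μ → Matrix κ ι ℂ) : Matrix ι ι ℂ →ₗ[ℂ] Matrix κ κ ℂ where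
  toFun X := ∑ i, K i * X * (K i)ᴴ
  map_add' X Y := by simp [Matrix.mul_add, Matrix.add_mul, Finset.sum_add_distrib]
  map_smul' c X := by simp [Finset.smul_sum, mul_smul_comm, smul_mul_assoc]

lemma krausMap_apply {ι κ μ : Type*} [Fintype ι] [Fintype κ] [Fintype μ]
    (K : μ → Matrix κ ι ℂ) (X : Matrix ι ι ℂ) :
    krausMap K X = ∑ i, K i * X * (K i)ᴴ := rfl

lemma psd_smul {d : Type*} [Fintype d] {M : Matrix d d ℂ} (hM : M.PosSemidef) {c : ℝ}
    (hc : 0 ≤ c) : ((c : ℂ) • M).PosSemidef := by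
  refine Matrix.PosSemidef.of_dotProduct_mulVec_nonneg ?_ ?_
  · ext i j
    simp [conjTranspose_apply, hM.1.apply, Complex.ext_iff]
  · intro x
    rw [smul_mulVec, dotProduct_smul]
    exact mul_nonneg (Complex.zero_le_real.2 hc) (hM.dotProduct_mulVec_nonneg x)

lemma posSemidef_one_kron {d : Type*} [Fintype d] [DecidableEq d] {n : ℕ} {B : Matrix d d ℂ}
    (hB : B.PosSemidef) : ((1 : Matrix (Fin n) (Fin n) ℂ) ⊗ₖ B).PosSemidef := by
  refine Matrix.PosSemidef.of_dotProduct_mulVec_nonneg ?_ ?_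
  · ext p q
    have hB' : star (B q.2 p.2) = B p.2 q.2 := by
      conv_rhs => rw [← hB.1]
      rfl
    simp only [conjTranspose_apply, kroneckerMap_apply, one_apply, star_mul']
    by_cases h : p.1 = q.1
    · simp [h, hB']
    · rw [if_neg h, if_neg (show ¬ q.1 = p.1 from fun hh => h hh.symm)]
      simp
  · intro x
    have key : star x ⬝ᵥ ((1 : Matrix (Fin n) (Fin n) ℂ) ⊗ₖ B) *ᵥ x
        = ∑ a : Fin n, star (fun b => x (a, b)) ⬝ᵥ B *ᵥ (fun b => x (a, b)) := by
      simp only [dotProduct, mulVec, Fintype.sum_prod_type, kroneckerMap_apply, one_apply,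
        Pi.star_apply, dotProduct]
      refine Finset.sum_congr rfl fun a _ => ?_
      refine Finset.sum_congr rfl fun b _ => ?_
      congr 1
      rw [Finset.sum_comm]
      refine Finset.sum_congr rfl fun b' _ => ?_
      simp [ite_mul, one_mul, zero_mul, Finset.sum_ite_eq]
    rw [key]
    exact Finset.sum_nonneg fun a _ => hB.dotProduct_mulVec_nonneg _

open scoped InnerProductSpace in
lemma aux_psd {d : Type*} [Fintype d] [DecidableEq d] (v : d → ℂ) (r : ℝ) (hr : 0 ≤ r)
    (hrN : r * (star v ⬝ᵥ v).re ≤ 1) :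
    ((1 : Matrix d d ℂ) - (r : ℂ) • Matrix.of (fun b b' => v b * star (v b'))).PosSemidef := by
  set W := Matrix.of (fun b b' : d => v b * star (v b')) with hWdef
  have hquad : ∀ x : d → ℂ, star x ⬝ᵥ W *ᵥ x = star (star v ⬝ᵥ x) * (star v ⬝ᵥ x) := by
    intro x
    simp only [dotProduct, mulVec, hWdef, Matrix.of_apply, Pi.star_apply, star_sum, star_mul',
      star_star, Finset.mul_sum, Finset.sum_mul]
    conv_rhs => rw [Finset.sum_comm]
    refine Finset.sum_congr rfl fun b _ => Finset.sum_congr rfl fun b' _ => by ring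
  have hWH : W.IsHermitian := by
    ext b b'
    simp [hWdef, conjTranspose_apply, star_mul', mul_comm]
  have hWpsd : W.PosSemidef :=
    Matrix.PosSemidef.of_dotProduct_mulVec_nonneg hWH fun x => by rw [hquad]; exact star_mul_self_nonneg _
  refine Matrix.PosSemidef.of_dotProduct_mulVec_nonneg ?_ ?_
  · exact Matrix.isHermitian_one.sub (psd_smul hWpsd hr).1
  · intro x
    rw [sub_mulVec, dotProduct_sub, one_mulVec, smul_mulVec, dotProduct_smul, hquad]
    set V : EuclideanSpace ℂ d := (WithLp.equiv 2 _).symm v with hV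
    set X : EuclideanSpace ℂ d := (WithLp.equiv 2 _).symm x with hX
    have hzz : star v ⬝ᵥ x = ⟪V, X⟫_ℂ := by rw [dotProduct_comm]; rfl
    have hxx : star x ⬝ᵥ x = ((‖X‖ ^ 2 : ℝ) : ℂ) := by
      rw [show star x ⬝ᵥ x = ⟪X, X⟫_ℂ by rw [dotProduct_comm]; rfl, inner_self_eq_norm_sq_to_K]
      norm_cast
    have hvv : (star v ⬝ᵥ v).re = ‖V‖ ^ 2 := by
      rw [show star v ⬝ᵥ v = ⟪V, V⟫_ℂ by rw [dotProduct_comm]; rfl, inner_self_eq_norm_sq_to_K]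
      norm_cast
    rw [hvv] at hrN
    have hcs : ‖⟪V, X⟫_ℂ‖ ≤ ‖V‖ * ‖X‖ := norm_inner_le_norm V X
    have hz2 : star ⟪V, X⟫_ℂ * ⟪V, X⟫_ℂ = ((‖⟪V, X⟫_ℂ‖ ^ 2 : ℝ) : ℂ) := by
      rw [RCLike.star_def]
      exact_mod_cast RCLike.conj_mul _
    rw [hzz, hz2, hxx, smul_eq_mul]
    have key : r * ‖⟪V, X⟫_ℂ‖^2 ≤ ‖X‖^2 := by
      nlinarith [mul_le_mul hcs hcs (norm_nonneg _) (mul_nonneg (norm_nonneg V) (norm_nonneg X)),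
        mul_le_mul_of_nonneg_right hrN (sq_nonneg ‖X‖), sq_nonneg ‖X‖, norm_nonneg V,
        norm_nonneg X, norm_nonneg ⟪V, X⟫_ℂ]
    have : ((‖X‖ ^ 2 : ℝ) : ℂ) - (r : ℂ) * ((‖⟪V, X⟫_ℂ‖ ^ 2 : ℝ) : ℂ)
        = ((‖X‖^2 - r * ‖⟪V, X⟫_ℂ‖^2 : ℝ) : ℂ) := by push_cast; ring
    rw [this]
    exact Complex.zero_le_real.2 (by linarith)

lemma exists_vec {d : Type*} [Fintype d] [DecidableEq d] {A B : Matrix d d ℂ}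
    (h : A.rank < B.rank) : ∃ v : d → ℂ, A *ᵥ v = 0 ∧ B *ᵥ v ≠ 0 := by
  by_contra hc
  push_neg at hc
  have hker : LinearMap.ker A.mulVecLin ≤ LinearMap.ker B.mulVecLin := by
    intro v hv
    rw [LinearMap.mem_ker] at hv ⊢
    rw [mulVecLin_apply] at hv ⊢
    exact hc v hv
  have h1 := A.mulVecLin.finrank_range_add_finrank_ker
  have h2 := B.mulVecLin.finrank_range_add_finrank_ker
  have h3 := Submodule.finrank_mono hker
  have hA : A.rank = Module.finrank ℂ (LinearMap.range A.mulVecLin) := rfl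
  have hB : B.rank = Module.finrank ℂ (LinearMap.range B.mulVecLin) := rfl
  omega

lemma kraus1_apply {d : Type*} [Fintype d] [DecidableEq d] {n : ℕ} (c : ℝ) (v : d → ℂ)
    (A : Matrix d d ℂ) (a b : Fin 1) :
    (∑ i : Fin n, (Matrix.of fun (_ : Fin 1) (p : Fin n × d) =>
        (c:ℂ) * (if p.1 = i then star (v p.2) else 0)) * ((1 : Matrix (Fin n) (Fin n) ℂ) ⊗ₖ A) *
        (Matrix.of fun (_ : Fin 1) (p : Fin n × d) =>
        (c:ℂ) * (if p.1 = i then star (v p.2) else 0))ᴴ) a b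
      = (n:ℂ) * (c:ℂ)^2 * (star v ⬝ᵥ A *ᵥ v) := by
  simp only [Matrix.sum_apply, Matrix.mul_apply, Matrix.conjTranspose_apply, Matrix.of_apply,
    kroneckerMap_apply, Matrix.one_apply, Fintype.sum_prod_type, mul_ite, ite_mul, mul_zero,
    zero_mul, mul_one, one_mul, star_mul', star_zero, star_star, apply_ite (star : ℂ → ℂ),
    Finset.sum_ite_eq, Finset.sum_ite_eq', Finset.mem_univ, if_true, Finset.sum_ite_irrel,
    Finset.sum_const_zero, ite_self, if_pos]
  simp only [Complex.star_def, Complex.conj_ofReal]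
  simp only [← Complex.star_def]
  rw [Finset.sum_const, Finset.card_univ, Fintype.card_fin, nsmul_eq_mul]
  have h : ∑ x : d, (∑ x1 : d, (c:ℂ) * star (v x1) * A x1 x) * ((c:ℂ) * v x)
      = (c:ℂ)^2 * (star v ⬝ᵥ A *ᵥ v) := by
    simp only [dotProduct, mulVec, Pi.star_apply, Finset.mul_sum, Finset.sum_mul]
    rw [Finset.sum_comm]
    exact Finset.sum_congr rfl fun i _ => Finset.sum_congr rfl fun j _ => by ring
  rw [h]
  ring

lemma kraus1_sum {d : Type*} [Fintype d] [DecidableEq d] {n : ℕ} (c : ℝ) (v : d → ℂ) :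
    (1 : Matrix (Fin n × d) (Fin n × d) ℂ) - ∑ i : Fin n,
      ((Matrix.of fun (_ : Fin 1) (p : Fin n × d) =>
        (c:ℂ) * (if p.1 = i then star (v p.2) else 0))ᴴ *
       (Matrix.of fun (_ : Fin 1) (p : Fin n × d) =>
        (c:ℂ) * (if p.1 = i then star (v p.2) else 0)))
    = (1 : Matrix (Fin n) (Fin n) ℂ) ⊗ₖ
        ((1 : Matrix d d ℂ) - ((c^2 : ℝ) : ℂ) • Matrix.of (fun b b' => v b * star (v b'))) := by
  ext p q
  simp only [Matrix.sub_apply, Matrix.sum_apply, Matrix.mul_apply, Matrix.conjTranspose_apply,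
    Matrix.of_apply, Matrix.one_apply, kroneckerMap_apply, Matrix.smul_apply, smul_eq_mul,
    star_mul', star_zero, star_star, apply_ite (star : ℂ → ℂ), mul_ite, ite_mul, mul_zero,
    zero_mul, Finset.sum_ite_eq, Finset.sum_ite_eq', Finset.mem_univ, if_true,
    Finset.sum_const_zero, Complex.star_def, Complex.conj_ofReal, Fin.sum_univ_one]
  simp only [← Complex.star_def]
  by_cases h1 : p.1 = q.1
  · by_cases h2 : p.2 = q.2
    · have hpq : p = q := Prod.ext h1 h2
      simp only [hpq, if_pos rfl, h1, h2, if_true, star_star, one_mul]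
      push_cast
      ring
    · have hpq : p ≠ q := fun h => h2 (congrArg Prod.snd h)
      simp only [if_neg hpq, if_pos h1, if_neg h2, star_star, one_mul]
      push_cast
      ring
  · have hpq : p ≠ q := fun h => h1 (congrArg Prod.fst h)
    simp [if_neg hpq, if_neg h1]

lemma kraus2_one {d : Type*} [Fintype d] [DecidableEq d] {n : ℕ} (cn : ℝ)
    (hcn : (n : ℂ) * (cn:ℂ)^2 = 1) (S σ' : Matrix d d ℂ) (hS : Sᴴ = S) (hSS : S * S = σ') :
    ∑ ji : d × Fin n, (Matrix.of fun (a : d) (b : Fin n) =>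
        (cn:ℂ) * S a ji.1 * (if b = ji.2 then 1 else 0)) * (1 : Matrix (Fin n) (Fin n) ℂ) *
      (Matrix.of fun (a : d) (b : Fin n) =>
        (cn:ℂ) * S a ji.1 * (if b = ji.2 then 1 else 0))ᴴ = σ' := by
  ext a a'
  simp only [Matrix.mul_one, Matrix.sum_apply, Matrix.mul_apply, Matrix.conjTranspose_apply,
    Matrix.of_apply, star_mul', star_one, star_zero, apply_ite (star : ℂ → ℂ), mul_ite, ite_mul,
    mul_zero, zero_mul, mul_one, one_mul, Finset.sum_ite_eq, Finset.sum_ite_eq',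
    Finset.mem_univ, if_true, Finset.sum_const_zero, Complex.star_def, Complex.conj_ofReal,
    Fintype.sum_prod_type]
  simp only [← Complex.star_def]
  have hstar : ∀ i j, star (S i j) = S j i := fun i j => by
    conv_rhs => rw [← hS]
    rfl
  simp only [Finset.sum_const, Finset.card_univ, Fintype.card_fin, nsmul_eq_mul]
  rw [← hSS, Matrix.mul_apply]
  refine Finset.sum_congr rfl fun x _ => ?_
  rw [hstar]
  calc (n:ℂ) * ((cn:ℂ) * S a x * ((cn:ℂ) * S x a'))
      = (n:ℂ) * (cn:ℂ)^2 * (S a x * S x a') := by ring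
    _ = S a x * S x a' := by rw [hcn, one_mul]

lemma kraus2_sum {d : Type*} [Fintype d] [DecidableEq d] {n : ℕ} (cn : ℝ) (S σ' : Matrix d d ℂ)
    (hS : Sᴴ = S) (hSS : S * S = σ') :
    ∑ ji : d × Fin n, (Matrix.of fun (a : d) (b : Fin n) =>
        (cn:ℂ) * S a ji.1 * (if b = ji.2 then 1 else 0))ᴴ *
      (Matrix.of fun (a : d) (b : Fin n) =>
        (cn:ℂ) * S a ji.1 * (if b = ji.2 then 1 else 0))
      = (((cn^2 : ℝ):ℂ) * σ'.trace) • (1 : Matrix (Fin n) (Fin n) ℂ) := by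
  ext b b'
  simp only [Matrix.sum_apply, Matrix.mul_apply, Matrix.conjTranspose_apply,
    Matrix.of_apply, star_mul', star_one, star_zero, apply_ite (star : ℂ → ℂ), mul_ite, ite_mul,
    mul_zero, zero_mul, mul_one, one_mul, Finset.sum_ite_eq, Finset.sum_ite_eq',
    Finset.mem_univ, if_true, Finset.sum_const_zero, Complex.star_def, Complex.conj_ofReal,
    Fintype.sum_prod_type, Matrix.smul_apply, Matrix.one_apply, smul_eq_mul]
  simp only [← Complex.star_def]
  have hstar : ∀ i j, star (S i j) = S j i := fun i j => by
    conv_rhs => rw [← hS]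
    rfl
  by_cases hb : b = b'
  · subst hb
    simp only [← ite_and, and_self, if_pos rfl]
    simp only [Finset.sum_ite_irrel, Finset.sum_const_zero, Finset.sum_ite_eq,
      Finset.mem_univ, if_true]
    rw [trace, ← hSS]
    simp only [diag_apply, Matrix.mul_apply, Finset.mul_sum]
    refine Finset.sum_congr rfl fun x _ => Finset.sum_congr rfl fun x2 _ => ?_
    rw [hstar]
    push_cast
    ring
  · rw [if_neg hb]
    refine Finset.sum_eq_zero fun x _ => Finset.sum_eq_zero fun x1 _ =>
      Finset.sum_eq_zero fun x2 _ => ?_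
    by_cases h1 : b' = x1
    · rw [if_pos h1, if_neg (fun h2 : b = x1 => hb (h2.trans h1.symm))]
    · rw [if_neg h1]

/-- If `ρ ≤ σ` and `rank(σ - ρ) < rank σ`, then the dichotomy `(ρ,σ)` is bounded below and
above by natural numbers: `1 ≼ n·(ρ,σ)` and `(ρ,σ) ≼ n` in the dichotomy preorder, where the
natural number `n` is the dichotomy `(Iₙ, Iₙ)` on `ℂⁿ` and `n·(ρ,σ) = (Iₙ ⊗ ρ, Iₙ ⊗ σ)`. -/
theorem dichotomy_bounded_of_le_rank {d : Type} [Fintype d] [DecidableEq d]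
    (ρ σ : Matrix d d ℂ)
    (hρ : ρ.PosSemidef) (hσ : σ.PosSemidef) (hsupp : SuppLE ρ σ) (hσne : σ ≠ 0)
    (hle : (σ - ρ).PosSemidef) (hrank : (σ - ρ).rank < σ.rank) :
    ∃ n : ℕ, 0 < n ∧
      (∃ T₁ : Matrix (Fin n × d) (Fin n × d) ℂ →ₗ[ℂ] Matrix (Fin 1) (Fin 1) ℂ,
        IsCPTNI T₁ ∧
        (T₁ ((1 : Matrix (Fin n) (Fin n) ℂ) ⊗ₖ ρ) - 1).PosSemidef ∧
        T₁ ((1 : Matrix (Fin n) (Fin n) ℂ) ⊗ₖ σ) = 1) ∧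
      (∃ T₂ : Matrix (Fin n) (Fin n) ℂ →ₗ[ℂ] Matrix d d ℂ,
        IsCPTNI T₂ ∧
        (T₂ 1 - ρ).PosSemidef ∧
        T₂ 1 = σ) := by
  classical
  obtain ⟨v, hv1, hv2⟩ := exists_vec hrank
  -- the scalar t = ⟨v, σ v⟩ is real and positive
  have htc_nonneg : (0:ℂ) ≤ star v ⬝ᵥ σ *ᵥ v := hσ.dotProduct_mulVec_nonneg v
  have htc_ne : star v ⬝ᵥ σ *ᵥ v ≠ 0 := fun h =>
    hv2 ((hσ.dotProduct_mulVec_zero_iff v).mp h)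
  set t : ℝ := (star v ⬝ᵥ σ *ᵥ v).re with htdef
  have htc : star v ⬝ᵥ σ *ᵥ v = (t : ℂ) :=
    Complex.eq_re_of_ofReal_le (by rw [Complex.ofReal_zero]; exact htc_nonneg)
  have ht_nonneg : 0 ≤ t := (Complex.nonneg_iff.mp htc_nonneg).1
  have ht_ne : t ≠ 0 := fun h => htc_ne (by rw [htc, h, Complex.ofReal_zero])
  have ht_pos : 0 < t := lt_of_le_of_ne ht_nonneg (Ne.symm ht_ne)
  -- ⟨v, ρ v⟩ = t as well
  have hρv : star v ⬝ᵥ ρ *ᵥ v = (t : ℂ) := by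
    have h0 : star v ⬝ᵥ (σ - ρ) *ᵥ v = 0 := by rw [hv1, dotProduct_zero]
    rw [sub_mulVec, dotProduct_sub, sub_eq_zero] at h0
    rw [← h0, htc]
  -- the norm of v
  set N : ℝ := (star v ⬝ᵥ v).re with hNdef
  -- the trace of σ is real and nonnegative
  have htrace_nonneg : (0:ℂ) ≤ σ.trace := by
    rw [trace]
    refine Finset.sum_nonneg fun i _ => ?_
    simpa [dotProduct, mulVec, Pi.single_apply, apply_ite (star : ℂ → ℂ), mul_ite, ite_mul,
      Finset.sum_ite_eq, Finset.sum_ite_eq'] using hσ.dotProduct_mulVec_nonneg (Pi.single i 1)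
  set tr : ℝ := σ.trace.re with htrdef
  have htrc : σ.trace = (tr : ℂ) :=
    Complex.eq_re_of_ofReal_le (by rw [Complex.ofReal_zero]; exact htrace_nonneg)
  have htr_nonneg : 0 ≤ tr := (Complex.nonneg_iff.mp htrace_nonneg).1
  -- choice of n
  set n : ℕ := max (max 1 ⌈N / t⌉₊) ⌈tr⌉₊ with hndef
  have hn0 : 0 < n :=
    lt_of_lt_of_le Nat.one_pos (le_trans (le_max_left 1 _) (le_max_left _ _))
  have hnR : (0:ℝ) < n := by exact_mod_cast hn0
  have hnt_pos : (0:ℝ) < (n:ℝ) * t := mul_pos hnR ht_pos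
  have hnt : N ≤ (n:ℝ) * t := by
    have h1 : N / t ≤ (⌈N / t⌉₊ : ℝ) := Nat.le_ceil _
    have h2 : ((⌈N / t⌉₊ : ℕ) : ℝ) ≤ (n:ℝ) := by
      exact_mod_cast le_trans (le_max_right 1 _) (le_max_left _ _)
    exact (div_le_iff₀ ht_pos).1 (h1.trans h2)
  have hntr : tr ≤ (n:ℝ) := by
    refine (Nat.le_ceil tr).trans ?_
    exact_mod_cast le_max_right (max 1 ⌈N / t⌉₊) ⌈tr⌉₊
  refine ⟨n, hn0, ?_, ?_⟩
  · -- the map T₁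
    set c : ℝ := Real.sqrt (((n:ℝ) * t)⁻¹) with hcdef
    have hc2 : c^2 = ((n:ℝ) * t)⁻¹ := Real.sq_sqrt (inv_nonneg.2 hnt_pos.le)
    set K : Fin n → Matrix (Fin 1) (Fin n × d) ℂ :=
      fun i => Matrix.of fun (_ : Fin 1) (p : Fin n × d) =>
        (c:ℂ) * (if p.1 = i then star (v p.2) else 0) with hKdef
    have hval : ∀ A : Matrix d d ℂ, krausMap K ((1 : Matrix (Fin n) (Fin n) ℂ) ⊗ₖ A)
        = Matrix.of fun (_ _ : Fin 1) => (n:ℂ) * (c:ℂ)^2 * (star v ⬝ᵥ A *ᵥ v) := by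
      intro A
      ext a b
      rw [krausMap_apply]
      exact kraus1_apply c v A a b
    have hscal : (n:ℂ) * (c:ℂ)^2 * ((t:ℝ):ℂ) = 1 := by
      have : (n:ℝ) * c^2 * t = 1 := by
        rw [hc2]
        field_simp
      exact_mod_cast congrArg (fun x : ℝ => (x : ℂ)) this
    have hone : ∀ A : Matrix d d ℂ, star v ⬝ᵥ A *ᵥ v = (t:ℂ) →
        krausMap K ((1 : Matrix (Fin n) (Fin n) ℂ) ⊗ₖ A) = 1 := by
      intro A hA
      rw [hval A, hA]
      ext a b
      have hab : a = b := Subsingleton.elim a b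
      subst hab
      simp [Matrix.one_apply, hscal]
    refine ⟨krausMap K, ⟨n, K, fun X => rfl, ?_⟩, ?_, hone σ htc⟩
    · rw [show (∑ i, (K i)ᴴ * K i) = ∑ i : Fin n, ((K i)ᴴ * K i) from rfl, hKdef]
      rw [kraus1_sum c v]
      refine posSemidef_one_kron (aux_psd v (c^2) (sq_nonneg c) ?_)
      rw [hc2, ← hNdef, ← div_eq_inv_mul]
      exact (div_le_one hnt_pos).2 hnt
    · rw [hone ρ hρv, sub_self]
      exact Matrix.PosSemidef.zero
  · -- the map T₂
    set cn : ℝ := Real.sqrt ((n:ℝ)⁻¹) with hcndef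
    have hcn2 : cn^2 = (n:ℝ)⁻¹ := Real.sq_sqrt (inv_nonneg.2 hnR.le)
    have hcnC : (n : ℂ) * (cn:ℂ)^2 = 1 := by
      have : (n:ℝ) * cn^2 = 1 := by
        rw [hcn2]
        field_simp
      exact_mod_cast congrArg (fun x : ℝ => (x : ℂ)) this
    set S : Matrix d d ℂ := (open scoped MatrixOrder in CFC.sqrt σ) with hSdef
    have hSherm : Sᴴ = S := (open scoped MatrixOrder in (CFC.sqrt_nonneg σ).posSemidef.1)
    have hSS : S * S = σ := (open scoped MatrixOrder in CFC.sqrt_mul_sqrt_self σ hσ.nonneg)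
    set K2 : (d × Fin n) → Matrix d (Fin n) ℂ :=
      fun ji => Matrix.of fun (a : d) (b : Fin n) =>
        (cn:ℂ) * S a ji.1 * (if b = ji.2 then 1 else 0) with hK2def
    have hT2one : krausMap K2 (1 : Matrix (Fin n) (Fin n) ℂ) = σ := by
      rw [krausMap_apply]
      exact kraus2_one cn hcnC S σ hSherm hSS
    set e : Fin (Fintype.card (d × Fin n)) ≃ (d × Fin n) := (Fintype.equivFin (d × Fin n)).symm
      with hedef
    refine ⟨krausMap K2, ⟨Fintype.card (d × Fin n), fun k => K2 (e k), ?_, ?_⟩, ?_, hT2one⟩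
    · intro X
      rw [krausMap_apply]
      exact (Equiv.sum_comp e (fun p => K2 p * X * (K2 p)ᴴ)).symm
    · rw [show (∑ k, (K2 (e k))ᴴ * K2 (e k)) = ∑ p, (K2 p)ᴴ * K2 p from
        Equiv.sum_comp e (fun p => (K2 p)ᴴ * K2 p), hK2def]
      rw [kraus2_sum cn S σ hSherm hSS, htrc]
      have heq : (1 : Matrix (Fin n) (Fin n) ℂ) - (((cn^2 : ℝ):ℂ) * ((tr:ℝ):ℂ)) • 1
          = (((1 - cn^2 * tr : ℝ)):ℂ) • (1 : Matrix (Fin n) (Fin n) ℂ) := by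
        push_cast
        rw [sub_smul, one_smul]
      rw [heq]
      refine psd_smul Matrix.PosSemidef.one ?_
      have : cn^2 * tr ≤ 1 := by
        rw [hcn2, ← div_eq_inv_mul]
        exact (div_le_one hnR).2 hntr
      linarith
    · rw [hT2one]
      exact hle
end

section
/- The dichotomy u = (3,2) on ℂ is power universal: for every dichotomy (ρ,σ) (positive semidefinite operators on a finite-dimensional Hilbert space with supp ρ ⊆ supp σ, ρ ≠ 0), there exists k ∈ ℕ such that (3^k, 2^k) ≽ (ρ,σ) and (3^k ρ, 2^k σ) ≽ (1,1) in the dichotomy preorder. -/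
/-!
If `ker σ ⊆ ker ρ`, write `σ = Aᴴ A` and `ρ = Bᴴ B`; then `B = R A` for some `R`, so
`ρ = Aᴴ (Rᴴ R) A ≤ ‖R‖² σ`. Both required maps are replacement maps `X ↦ (tr X) • τ`, which are
CPTNI as soon as `τ ≥ 0` and `tr τ ≤ 1`. For `(3ᵏ, 2ᵏ) ≽ (ρ, σ)` take `τ = 2⁻ᵏ σ`, which works
once `(3/2)ᵏ ≥ ‖R‖²` and `2ᵏ ≥ tr σ`; for `(3ᵏ ρ, 2ᵏ σ) ≽ (1, 1)` take `τ = (2ᵏ tr σ)⁻¹`, which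
works once `2ᵏ tr σ ≥ 1` and `(3/2)ᵏ ≥ tr σ / tr ρ`. All four conditions hold for large `k`.
-/

open Matrix
open scoped Kronecker ComplexOrder

open Filter

theorem Matrix.exists_eq_mul_of_ker_le {K l m n : Type*} [Field K] [Fintype m] [Fintype n]
    [DecidableEq m] [DecidableEq n] {A : Matrix m n K} {B : Matrix l n K}
    (h : ∀ v, A *ᵥ v = 0 → B *ᵥ v = 0) : ∃ R : Matrix l m K, B = R * A := by
  set p := LinearMap.ker (toLin' A)
  have hle : p ≤ LinearMap.ker (toLin' B) := fun v hv => h v hv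
  -- `B` descends to the quotient by `ker A`, which `A` embeds; extend along that embedding.
  obtain ⟨g, hg⟩ := IsSemisimpleModule.extension_property (p.liftQ (toLin' A) le_rfl)
    (by rw [← LinearMap.ker_eq_bot, Submodule.ker_liftQ_eq_bot' _ _ rfl]) (p.liftQ _ hle)
  refine ⟨LinearMap.toMatrix' g, toLin'.injective ?_⟩
  rw [toLin'_mul, toLin'_toMatrix']
  refine LinearMap.ext fun v => ?_
  simpa using (congrArg (fun f => f (p.mkQ v)) hg).symm

open scoped MatrixOrder in
theorem Matrix.PosSemidef.exists_eq_conjTranspose_mul_self {𝕜 n : Type*} [RCLike 𝕜] [Fintype n]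
    [DecidableEq n] {A : Matrix n n 𝕜} (hA : A.PosSemidef) : ∃ B, A = Bᴴ * B :=
  CStarAlgebra.nonneg_iff_eq_star_mul_self.mp hA.nonneg

theorem Matrix.PosSemidef.exists_trace_eq_ofReal_pos {n : Type*} [Fintype n]
    {A : Matrix n n ℂ} (hA : A.PosSemidef) (h : A ≠ 0) : ∃ s : ℝ, A.trace = s ∧ 0 < s := by
  have hre : A.trace = A.trace.re :=
    Complex.eq_re_of_ofReal_le (r := 0) (by simpa using hA.trace_nonneg)
  refine ⟨_, hre, Complex.zero_lt_real.1 ?_⟩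
  rw [← hre]
  exact hA.trace_nonneg.lt_of_ne (Ne.symm ((hA.trace_eq_zero_iff).not.2 h))

open scoped MatrixOrder Matrix.Norms.L2Operator in
theorem Matrix.PosSemidef.eventually_smul_sub_posSemidef {n : Type*} [Fintype n] [DecidableEq n]
    {ρ σ : Matrix n n ℂ} (hρ : ρ.PosSemidef) (hσ : σ.PosSemidef)
    (h : ∀ v, σ *ᵥ v = 0 → ρ *ᵥ v = 0) : ∀ᶠ C : ℝ in atTop, (C • σ - ρ).PosSemidef := by
  obtain ⟨A, rfl⟩ := hσ.exists_eq_conjTranspose_mul_self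
  obtain ⟨B, rfl⟩ := hρ.exists_eq_conjTranspose_mul_self
  obtain ⟨R, rfl⟩ := exists_eq_mul_of_ker_le (A := A) (B := B) fun v hv => by
    rw [← conjTranspose_mul_self_mulVec_eq_zero] at hv ⊢
    exact h v hv
  filter_upwards [eventually_ge_atTop (‖R‖ ^ 2)] with C hC
  have hR : Rᴴ * R ≤ C • (1 : Matrix n n ℂ) := by
    have := CStarAlgebra.star_mul_le_algebraMap_norm_sq (a := R)
    rw [Algebra.algebraMap_eq_smul_one] at this
    exact this.trans (smul_le_smul_of_nonneg_right hC zero_le_one)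
  have := star_left_conjugate_le_conjugate hR A
  rw [Matrix.mul_smul, Matrix.mul_one, Matrix.smul_mul] at this
  rw [conjTranspose_mul, ← Matrix.mul_assoc, Matrix.mul_assoc Aᴴ]
  exact Matrix.le_iff.1 this

theorem isCPTNI_of_kraus {ι κ η : Type} [Fintype ι] [DecidableEq ι] [Fintype κ] [DecidableEq κ]
    [Fintype η] {T : Matrix ι ι ℂ →ₗ[ℂ] Matrix κ κ ℂ} (K : η → Matrix κ ι ℂ)
    (hT : ∀ X, T X = ∑ i, K i * X * (K i)ᴴ) (hK : (1 - ∑ i, (K i)ᴴ * K i).PosSemidef) :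
    IsCPTNI T := by
  let e := Fintype.equivFin η
  refine ⟨Fintype.card η, K ∘ e.symm, fun X => ?_, ?_⟩
  · rw [hT, ← e.symm.sum_comp]; rfl
  · rwa [← e.symm.sum_comp] at hK

noncomputable def replacementMap (ι : Type) {κ : Type} [Fintype ι] (τ : Matrix κ κ ℂ) :
    Matrix ι ι ℂ →ₗ[ℂ] Matrix κ κ ℂ :=
  (traceLinearMap ι ℂ ℂ).smulRight τ

@[simp]
theorem replacementMap_apply {ι κ : Type} [Fintype ι] (τ : Matrix κ κ ℂ) (X : Matrix ι ι ℂ) :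
    replacementMap ι τ X = X.trace • τ :=
  rfl

theorem isCPTNI_replacementMap {ι κ : Type} [Fintype ι] [DecidableEq ι] [Fintype κ]
    [DecidableEq κ] {τ : Matrix κ κ ℂ} (hτ : τ.PosSemidef) (htr : τ.trace ≤ 1) :
    IsCPTNI (replacementMap ι τ) := by
  obtain ⟨B, rfl⟩ := hτ.exists_eq_conjTranspose_mul_self
  have hK : ∀ (j : κ) (i : ι), (Bᴴ * single j i (1 : ℂ))ᴴ = single i j (1 : ℂ) * B :=
    fun j i => by
    rw [conjTranspose_mul, conjTranspose_conjTranspose, conjTranspose_single, star_one]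
  refine isCPTNI_of_kraus (fun p : κ × ι => Bᴴ * single p.1 p.2 (1 : ℂ)) (fun X => ?_) ?_
  · have hterm : ∀ (j : κ) (i : ι), Bᴴ * single j i (1 : ℂ) * X * (Bᴴ * single j i (1 : ℂ))ᴴ =
        X i i • (Bᴴ * single j j (1 : ℂ) * B) := fun j i => by
      rw [hK, show Bᴴ * single j i (1 : ℂ) * X * (single i j (1 : ℂ) * B) =
          Bᴴ * (single j i (1 : ℂ) * X * single i j (1 : ℂ)) * B by simp only [Matrix.mul_assoc],
        single_mul_mul_single, one_mul, mul_one, ← Matrix.smul_mul, ← Matrix.mul_smul, smul_single,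
        smul_eq_mul, mul_one]
    simp only [Fintype.sum_prod_type, hterm, replacementMap_apply]
    rw [Finset.sum_comm]
    simp only [← Finset.smul_sum, ← Finset.sum_smul, ← Finset.sum_mul, ← Finset.mul_sum,
      sum_single_one, Matrix.mul_one]
    rfl
  · have hterm : ∀ (j : κ) (i : ι), (Bᴴ * single j i (1 : ℂ))ᴴ * (Bᴴ * single j i (1 : ℂ)) =
        (B * Bᴴ) j j • single i i (1 : ℂ) := fun j i => by
      rw [hK, show single i j (1 : ℂ) * B * (Bᴴ * single j i (1 : ℂ)) =
          single i j (1 : ℂ) * (B * Bᴴ) * single j i (1 : ℂ) by simp only [Matrix.mul_assoc],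
        single_mul_mul_single, one_mul, mul_one, smul_single, smul_eq_mul, mul_one]
    simp only [Fintype.sum_prod_type, hterm, ← Finset.smul_sum, sum_single_one, ← Finset.sum_smul]
    have htrace : ∑ j, (B * Bᴴ) j j = (Bᴴ * B).trace := by rw [trace_mul_comm]; rfl
    simpa [htrace, sub_smul] using (PosSemidef.one (n := ι) (R := ℂ)).smul (sub_nonneg.2 htr)

/-- `DichotomyGE ρ σ ρ' σ'` is `(ρ, σ) ≽ (ρ', σ')` in the dichotomy preorder. -/
def DichotomyGE {ι κ : Type} [Fintype ι] [DecidableEq ι] [Fintype κ] [DecidableEq κ]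
    (ρ σ : Matrix ι ι ℂ) (ρ' σ' : Matrix κ κ ℂ) : Prop :=
  ∃ T : Matrix ι ι ℂ →ₗ[ℂ] Matrix κ κ ℂ, IsCPTNI T ∧ (T ρ - ρ').PosSemidef ∧ T σ = σ'

section
variable {d : Type} [Fintype d] [DecidableEq d] {ρ σ : Matrix d d ℂ}

theorem dichotomyGE_smul_one {a b s : ℝ} (hb : 0 < b) (hσ : σ.PosSemidef)
    (hs : σ.trace = s) (hsb : s ≤ b) (hρσ : ((a / b) • σ - ρ).PosSemidef) :
    DichotomyGE ((a : ℂ) • (1 : Matrix (Fin 1) (Fin 1) ℂ)) ((b : ℂ) • 1) ρ σ := by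
  refine ⟨replacementMap _ (b⁻¹ • σ), isCPTNI_replacementMap (hσ.smul (inv_nonneg.2 hb.le)) ?_,
    ?_, ?_⟩
  · simp only [trace_smul, hs, Complex.real_smul, Complex.ofReal_inv]
    exact_mod_cast (inv_mul_le_one₀ hb).2 hsb
  · simpa [smul_smul, div_eq_mul_inv] using hρσ
  · simp [smul_smul, hb.ne']

theorem dichotomyGE_one_one {a b s t : ℝ} (hs : σ.trace = s) (ht : ρ.trace = t)
    (hbs : 1 ≤ b * s) (hst : b * s ≤ a * t) :
    DichotomyGE ((a : ℂ) • ρ) ((b : ℂ) • σ) (1 : Matrix (Fin 1) (Fin 1) ℂ) 1 := by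
  have hbs0 : 0 < b * s := one_pos.trans_le hbs
  obtain ⟨hb0, hs0⟩ := mul_ne_zero_iff.1 hbs0.ne'
  refine ⟨replacementMap _ ((b * s)⁻¹ • 1),
    isCPTNI_replacementMap (PosSemidef.one.smul (inv_nonneg.2 hbs0.le)) ?_, ?_, ?_⟩
  · simpa using (by exact_mod_cast inv_le_one_of_one_le₀ hbs : (((b * s)⁻¹ : ℝ) : ℂ) ≤ 1)
  · have hts : 1 ≤ a * t / (b * s) := (one_le_div₀ hbs0).2 hst
    simpa [smul_smul, ht, sub_smul, div_eq_mul_inv, mul_assoc, mul_comm, mul_left_comm] using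
      (PosSemidef.one (n := Fin 1) (R := ℂ)).smul (sub_nonneg.2 hts)
  · simp [smul_smul, hs, hb0, hs0]

end

/-- The dichotomy `u = (3,2)` on `ℂ` is power universal: for every dichotomy `(ρ,σ)` with
`ρ ≠ 0` there is `k` such that `(3^k, 2^k) ≽ (ρ,σ)` and `(3^k ρ, 2^k σ) ≽ (1,1)` in the
dichotomy preorder (scalars on `ℂ` are identified with `1 × 1` matrices). -/
theorem power_universal_three_two {d : Type} [Fintype d] [DecidableEq d]
    (ρ σ : Matrix d d ℂ)
    (hρ : ρ.PosSemidef) (hσ : σ.PosSemidef) (hsupp : SuppLE ρ σ) (hρne : ρ ≠ 0) :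
    ∃ k : ℕ,
      (∃ T₁ : Matrix (Fin 1) (Fin 1) ℂ →ₗ[ℂ] Matrix d d ℂ,
        IsCPTNI T₁ ∧
        (T₁ (((3 : ℂ) ^ k) • 1) - ρ).PosSemidef ∧
        T₁ (((2 : ℂ) ^ k) • 1) = σ) ∧
      (∃ T₂ : Matrix d d ℂ →ₗ[ℂ] Matrix (Fin 1) (Fin 1) ℂ,
        IsCPTNI T₂ ∧
        (T₂ (((3 : ℂ) ^ k) • ρ) - 1).PosSemidef ∧
        T₂ (((2 : ℂ) ^ k) • σ) = 1) := by
  have hσne : σ ≠ 0 := by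
    rintro rfl
    exact hρne <| ext_of_mulVec_single fun i =>
      (hsupp _ (zero_mulVec _)).trans (zero_mulVec _).symm
  obtain ⟨s, hs, hs0⟩ := hσ.exists_trace_eq_ofReal_pos hσne
  obtain ⟨t, ht, ht0⟩ := hρ.exists_trace_eq_ofReal_pos hρne
  have hpow32 : Tendsto (fun k : ℕ => (3 / 2 : ℝ) ^ k) atTop atTop :=
    tendsto_pow_atTop_atTop_of_one_lt (by norm_num)
  have hpow2 : Tendsto (fun k : ℕ => (2 : ℝ) ^ k) atTop atTop :=
    tendsto_pow_atTop_atTop_of_one_lt one_lt_two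
  obtain ⟨k, hρσ, hsk, hsk', hst⟩ := (hpow32.eventually (hρ.eventually_smul_sub_posSemidef hσ hsupp)
    |>.and <| (hpow2.eventually_ge_atTop s).and <| (hpow2.eventually_ge_atTop s⁻¹).and <|
    hpow32.eventually_ge_atTop (s / t)).exists
  have h2k : (0 : ℝ) < 2 ^ k := by positivity
  rw [div_pow] at hρσ hst
  have hT₁ := dichotomyGE_smul_one (a := 3 ^ k) h2k hσ hs hsk hρσ
  have hT₂ := dichotomyGE_one_one (a := 3 ^ k) (b := 2 ^ k) hs ht
    ((inv_le_iff_one_le_mul₀ hs0).1 hsk')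
    (mul_comm s (2 ^ k) ▸ (div_le_div_iff₀ ht0 h2k).1 hst)
  push_cast at hT₁ hT₂
  exact ⟨k, hT₁, hT₂⟩
end
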